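/- arXiv:2601.17559 — 2 statements merged into one kernel-verified Lean document; each statement's English description precedes it below -/
import Mathlib

section
/- For every k ≥ 1, the commutator subgroup of GL₂(ℤ/2^kℤ) acts transitively on the set of vectors of exact additive order 2^k in (ℤ/2^kℤ)². -/
/-!
Write `U t = [1 t; 0 1]`, `L t = [1 0; t 1]` and `S = [0 1; 1 0]`. Over any commutative ring,
`⁅diag(u, 1), U t⁆ = U ((u - 1) t)` and `⁅S, U 1⁆ = [1 -1; 1 0]`. In a ring where `2` is nilpotent
every odd element is a unit, so taking `u = 3` puts every `U (2t)`, and its `S`-conjugate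
`L (2t)`, into the commutator subgroup. If `a, b` are odd and `b` is a unit, then
`U (2s) L (2β) ⁅S, U 1⁆` sends `e₁` to `(a, b)` for `b = 2β + 1` and suitable `s`. When only one
coordinate is odd, one or two more applications of `⁅S, U 1⁆` reduce to that case. So all
vectors with an odd coordinate lie in the orbit of `e₁`. Over `ℤ/2^kℤ` with `k ≥ 1`, these are
exactly the vectors of order `2^k`.
-/

open Matrix

open scoped commutatorElement

lemma commutatorElement_mem_commutator {G : Type*} [Group G] (g h : G) :
    ⁅g, h⁆ ∈ commutator G :=
  Subgroup.commutator_mem_commutator (Subgroup.mem_top g) (Subgroup.mem_top h)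

lemma Odd.isUnit_of_isNilpotent_two {R : Type*} [CommRing R] (h2 : IsNilpotent (2 : R)) {a : R}
    (ha : Odd a) : IsUnit a := by
  obtain ⟨m, rfl⟩ := ha
  exact ((Commute.all _ m).isNilpotent_mul_right h2).isUnit_add_one

namespace Matrix

variable {R : Type*} [CommRing R]

lemma swap_zero_one_fin_two : Matrix.swap R (0 : Fin 2) 1 = !![0, 1; 1, 0] := by
  ext i j
  fin_cases i <;> fin_cases j <;> simp [Matrix.swap]

namespace GeneralLinearGroup

lemma swap_inv {n : Type*} [DecidableEq n] [Fintype n] (i j : n) :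
    (swap R i j)⁻¹ = swap R i j :=
  inv_eq_of_mul_eq_one_right <| Units.ext <| swap_mul_self i j

def diagUnit (u : Rˣ) : GL (Fin 2) R :=
  ⟨!![(u : R), 0; 0, 1], !![((u⁻¹ : Rˣ) : R), 0; 0, 1], by simp [one_fin_two],
    by simp [one_fin_two]⟩

def lowerLeft (t : R) : GL (Fin 2) R :=
  ⟨!![1, 0; t, 1], !![1, 0; -t, 1], by simp [one_fin_two], by simp [one_fin_two]⟩

lemma commutatorElement_diagUnit_upperRightHom (u : Rˣ) (t : R) :
    ⁅diagUnit u, upperRightHom t⁆ = upperRightHom (((u : R) - 1) * t) := by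
  ext i j
  fin_cases i <;> fin_cases j <;>
    simp [diagUnit, commutatorElement_def, mul_apply, sub_mul, neg_add_eq_sub]

lemma val_commutatorElement_swap_upperRightHom_one :
    ((⁅swap R (0 : Fin 2) 1, upperRightHom 1⁆ : GL (Fin 2) R) : Matrix (Fin 2) (Fin 2) R) =
      !![1, -1; 1, 0] := by
  simp [commutatorElement_def, swap_inv, swap_zero_one_fin_two]

lemma swap_mul_upperRightHom_mul_swap (t : R) :
    swap R (0 : Fin 2) 1 * upperRightHom t * swap R 0 1 = lowerLeft t := by
  ext : 1
  simp [lowerLeft, swap_zero_one_fin_two]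

lemma upperRightHom_sub_one_mul_mem_commutator (u : Rˣ) (t : R) :
    upperRightHom (((u : R) - 1) * t) ∈ commutator (GL (Fin 2) R) := by
  rw [← commutatorElement_diagUnit_upperRightHom]
  exact commutatorElement_mem_commutator _ _

lemma upperRightHom_two_mul_mem_commutator (h3 : IsUnit (3 : R)) (t : R) :
    upperRightHom (2 * t) ∈ commutator (GL (Fin 2) R) := by
  have h := upperRightHom_sub_one_mul_mem_commutator h3.unit t
  rwa [h3.unit_spec, show (3 : R) - 1 = 2 by norm_num] at h

lemma lowerLeft_two_mul_mem_commutator (h3 : IsUnit (3 : R)) (t : R) :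
    lowerLeft (2 * t) ∈ commutator (GL (Fin 2) R) := by
  simpa only [swap_inv, swap_mul_upperRightHom_mul_swap] using
    Subgroup.Normal.conj_mem inferInstance _ (upperRightHom_two_mul_mem_commutator h3 t)
      (swap R (0 : Fin 2) 1)

lemma vecCons_mem_orbit_commutator_of_odd (h3 : IsUnit (3 : R)) {a b : R} (ha : Odd a)
    (hb : Odd b) (hbu : IsUnit b) :
    ![a, b] ∈ MulAction.orbit (commutator (GL (Fin 2) R)) ![1, 0] := by
  obtain ⟨α, rfl⟩ := ha
  obtain ⟨β, rfl⟩ := hb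
  set c : R := ↑hbu.unit⁻¹
  have hc : c * (2 * β + 1) = 1 := hbu.val_inv_mul
  let g : GL (Fin 2) R := upperRightHom (2 * (α * c)) * lowerLeft (2 * β) *
    ⁅swap R (0 : Fin 2) 1, upperRightHom 1⁆
  have hg : g ∈ commutator (GL (Fin 2) R) :=
    mul_mem (mul_mem (upperRightHom_two_mul_mem_commutator h3 _)
      (lowerLeft_two_mul_mem_commutator h3 _)) (commutatorElement_mem_commutator _ _)
  have h₁ : ⁅swap R (0 : Fin 2) 1, upperRightHom (1 : R)⁆ • ![(1 : R), 0] = ![1, 1] := by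
    rw [fin_two_smul, val_commutatorElement_swap_upperRightHom_one]
    simp
  have h₂ : lowerLeft (2 * β) • ![(1 : R), 1] = ![1, 2 * β + 1] := by
    rw [fin_two_smul]
    simp [lowerLeft]
  have h₃ : upperRightHom (2 * (α * c)) • ![1, 2 * β + 1] = ![2 * α + 1, 2 * β + 1] := by
    have h : 1 + 2 * (α * c) * (2 * β + 1) = 2 * α + 1 := by linear_combination 2 * α * hc
    rw [fin_two_smul]
    simp [h]
  exact ⟨⟨g, hg⟩, by simp only [g, MulAction.subgroup_smul_def, mul_smul, h₁, h₂, h₃]⟩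

lemma vecCons_mem_orbit_commutator (h2 : IsNilpotent (2 : R)) (hpar : ∀ x : R, Even x ∨ Odd x)
    {a b : R} (hab : Odd a ∨ Odd b) :
    ![a, b] ∈ MulAction.orbit (commutator (GL (Fin 2) R)) ![1, 0] := by
  have hunit : ∀ {x : R}, Odd x → IsUnit x := fun hx => hx.isUnit_of_isNilpotent_two h2
  have hodd : ∀ {x y : R}, Odd x → Odd y →
      ![x, y] ∈ MulAction.orbit (commutator (GL (Fin 2) R)) ![1, 0] := fun hx hy =>
    vecCons_mem_orbit_commutator_of_odd (hunit ⟨1, by norm_num⟩) hx hy (hunit hy)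
  set C : commutator (GL (Fin 2) R) :=
    ⟨⁅swap R (0 : Fin 2) 1, upperRightHom 1⁆, commutatorElement_mem_commutator _ _⟩
  have hC (x y : R) : C • ![x, y] = ![x - y, x] := by
    rw [MulAction.subgroup_smul_def, fin_two_smul, val_commutatorElement_swap_upperRightHom_one]
    simp [sub_eq_add_neg]
  rcases hab with ha | hb
  · rcases hpar b with hb | hb
    · have h := MulAction.mem_orbit_of_mem_orbit (C * C) (hodd (hb.sub_odd ha) ha.neg)
      rw [mul_smul, hC, hC] at h
      convert h using 3 <;> ring
    · exact hodd ha hb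
  · rcases hpar a with ha | ha
    · have h := MulAction.mem_orbit_of_mem_orbit C (hodd hb (hb.sub_even ha))
      rw [hC] at h
      convert h using 3
      ring
    · exact hodd ha hb

theorem mem_orbit_commutator (h2 : IsNilpotent (2 : R)) (hpar : ∀ x : R, Even x ∨ Odd x)
    {v w : Fin 2 → R} (hv : Odd (v 0) ∨ Odd (v 1)) (hw : Odd (w 0) ∨ Odd (w 1)) :
    w ∈ MulAction.orbit (commutator (GL (Fin 2) R)) v := by
  have h (x : Fin 2 → R) (hx : Odd (x 0) ∨ Odd (x 1)) :
      x ∈ MulAction.orbit (commutator (GL (Fin 2) R)) ![1, 0] := by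
    have hx' : ![x 0, x 1] = x := by ext i; fin_cases i <;> rfl
    exact hx' ▸ vecCons_mem_orbit_commutator h2 hpar hx
  rw [MulAction.orbit_eq_iff.mpr (h v hv)]
  exact h w hw

end GeneralLinearGroup

end Matrix

namespace ZMod

lemma even_or_odd {n : ℕ} (a : ZMod n) : Even a ∨ Odd a := by
  rw [← intCast_zmod_cast a]
  exact (Int.even_or_odd _).imp Even.intCast (Odd.map (Int.castRingHom _))

lemma isNilpotent_two_of_two_pow (k : ℕ) : IsNilpotent (2 : ZMod (2 ^ k)) :=
  ⟨k, by exact_mod_cast natCast_self (2 ^ k)⟩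

lemma odd_or_odd_of_addOrderOf_eq_two_pow {k : ℕ} (hk : 1 ≤ k) {v : Fin 2 → ZMod (2 ^ k)}
    (hv : addOrderOf v = 2 ^ k) : Odd (v 0) ∨ Odd (v 1) := by
  by_contra! h
  obtain ⟨r, hr⟩ := (even_or_odd (v 0)).resolve_right h.1
  obtain ⟨s, hs⟩ := (even_or_odd (v 1)).resolve_right h.2
  have hv2 : v = 2 • ![r, s] := by
    ext i
    fin_cases i <;> simp [hr, hs, two_mul]
  have hzero : 2 ^ (k - 1) • v = 0 := by
    rw [hv2, smul_smul, ← pow_succ, Nat.sub_add_cancel hk]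
    ext i
    simp [nsmul_eq_mul]
  have hdvd := addOrderOf_dvd_of_nsmul_eq_zero hzero
  rw [hv, Nat.pow_dvd_pow_iff_le_right (by norm_num)] at hdvd
  omega

end ZMod

/-- For every `k ≥ 1`, the commutator subgroup of `GL₂(ℤ/2^kℤ)` acts
transitively on the vectors of exact additive order `2^k` in `(ℤ/2^kℤ)²`. -/
theorem stmt15 (k : ℕ) (hk : 1 ≤ k) (v w : Fin 2 → ZMod (2 ^ k))
    (hv : addOrderOf v = 2 ^ k) (hw : addOrderOf w = 2 ^ k) :
    ∃ g : GL (Fin 2) (ZMod (2 ^ k)), g ∈ commutator (GL (Fin 2) (ZMod (2 ^ k))) ∧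
      (g : Matrix (Fin 2) (Fin 2) (ZMod (2 ^ k))).mulVec v = w := by
  obtain ⟨⟨g, hg⟩, hgv⟩ := GeneralLinearGroup.mem_orbit_commutator
    (ZMod.isNilpotent_two_of_two_pow k) ZMod.even_or_odd
    (ZMod.odd_or_odd_of_addOrderOf_eq_two_pow hk hv)
    (ZMod.odd_or_odd_of_addOrderOf_eq_two_pow hk hw)
  exact ⟨g, hg, hgv⟩
end

section
/- For every n ≥ 1, the commutator subgroup of GL₂(ℤ/nℤ) acts transitively on the set Vₙ of vectors of exact additive order n in (ℤ/nℤ)². -/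
/-!
Let `K = [G, G] ⬝ Stab(e₁)` in `G = GL₂(R)`; it is a subgroup because `[G, G]` is normal, and its
orbit through `e₁` is the `[G, G]`-orbit. Upper transvections fix `e₁`, and a lower transvection is
the commutator of an upper one with the coordinate swap, times that upper one; so `K` contains all
elementary matrices. Over `ℤ/nℤ` a vector of exact order `n` is unimodular, so some `v₀ + t v₁` is
a unit, and then four elementary matrices carry `e₁` to `v`.
-/

open Matrix MulAction
open scoped commutatorElement

theorem MulAction.exists_smul_eq_of_mem_sup_stabilizer {G X : Type*} [Group G] [MulAction G X]
    {N : Subgroup G} [N.Normal] {x : X} {g : G} (hg : g ∈ N ⊔ stabilizer G x) :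
    ∃ h ∈ N, h • x = g • x := by
  obtain ⟨h, hN, s, hs, rfl⟩ := Subgroup.mem_sup_of_normal_left.mp hg
  exact ⟨h, hN, by rw [mul_smul, mem_stabilizer_iff.mp hs]⟩

namespace Matrix.GeneralLinearGroup
variable {R : Type*} [CommRing R]

def upperTransvection (b : R) : GL (Fin 2) R :=
  ⟨!![1, b; 0, 1], !![1, -b; 0, 1], by simp [one_fin_two], by simp [one_fin_two]⟩

def lowerTransvection (b : R) : GL (Fin 2) R :=
  ⟨!![1, 0; b, 1], !![1, 0; -b, 1], by simp [one_fin_two], by simp [one_fin_two]⟩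

def swapCoords : GL (Fin 2) R :=
  ⟨!![0, 1; 1, 0], !![0, 1; 1, 0], by simp [one_fin_two], by simp [one_fin_two]⟩

lemma upperTransvection_smul (b x y : R) :
    upperTransvection b • ![x, y] = ![x + b * y, y] := by
  ext i; fin_cases i <;> simp [upperTransvection, Units.smul_def, mul_comm]

lemma lowerTransvection_smul (b x y : R) :
    lowerTransvection b • ![x, y] = ![x, b * x + y] := by
  ext i; fin_cases i <;> simp [lowerTransvection, Units.smul_def, mul_comm]

lemma lowerTransvection_eq_commutatorElement_mul (b : R) :
    lowerTransvection b =
      ⁅(swapCoords : GL (Fin 2) R), upperTransvection b⁆ * upperTransvection b := by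
  rw [commutatorElement_def, inv_mul_cancel_right]
  ext : 1
  simp [swapCoords, upperTransvection, lowerTransvection]

lemma upperTransvection_mem_stabilizer (b : R) :
    upperTransvection b ∈ stabilizer (GL (Fin 2) R) ![(1 : R), 0] :=
  mem_stabilizer_iff.mpr <| by rw [upperTransvection_smul]; simp

lemma upperTransvection_mem_commutator_sup_stabilizer (b : R) :
    upperTransvection b ∈ commutator (GL (Fin 2) R) ⊔ stabilizer _ ![(1 : R), 0] :=
  Subgroup.mem_sup_right (upperTransvection_mem_stabilizer b)

lemma lowerTransvection_mem_commutator_sup_stabilizer (b : R) :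
    lowerTransvection b ∈ commutator (GL (Fin 2) R) ⊔ stabilizer _ ![(1 : R), 0] := by
  rw [lowerTransvection_eq_commutatorElement_mul]
  exact Subgroup.mul_mem _
    (Subgroup.mem_sup_left (Subgroup.commutator_mem_commutator trivial trivial))
    (upperTransvection_mem_commutator_sup_stabilizer b)

theorem mem_orbit_commutator_of_isUnit_add_mul {v : Fin 2 → R} {t : R}
    (hu : IsUnit (v 0 + t * v 1)) :
    v ∈ orbit (commutator (GL (Fin 2) R)) ![1, 0] := by
  obtain ⟨u, hu⟩ := hu
  -- `e₁ ↦ (1, 1) ↦ (u, 1) ↦ (u, v₁) ↦ (u - t v₁, v₁) = v`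
  let g := upperTransvection (-t) * lowerTransvection ((v 1 - 1) * ↑u⁻¹) *
    upperTransvection ((u : R) - 1) * lowerTransvection 1
  have hgv : g • ![1, 0] = v := by
    simp only [g, mul_smul, lowerTransvection_smul, upperTransvection_smul]
    ext i; fin_cases i
    · simp only [Fin.zero_eta, cons_val_zero, mul_one, add_zero, add_sub_cancel,
        Units.inv_mul_cancel_right, sub_add_cancel, neg_mul]
      linear_combination hu
    · simp
  have hg : g ∈ commutator (GL (Fin 2) R) ⊔ stabilizer _ ![(1 : R), 0] :=
    have hU := upperTransvection_mem_commutator_sup_stabilizer (R := R)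
    have hL := lowerTransvection_mem_commutator_sup_stabilizer (R := R)
    mul_mem (mul_mem (mul_mem (hU _) (hL _)) (hU _)) (hL _)
  obtain ⟨h, hh, hhg⟩ := exists_smul_eq_of_mem_sup_stabilizer hg
  exact ⟨⟨h, hh⟩, hhg.trans hgv⟩

end Matrix.GeneralLinearGroup

theorem Nat.exists_coprime_add_mul {a b n : ℕ} (hn : n ≠ 0)
    (hab : ∀ p, p.Prime → p ∣ n → p ∣ a → ¬ p ∣ b) : ∃ t, Coprime (a + t * b) n := by
  -- each prime factor of `n` divides exactly one of `a` and `t`, and none divides both `a` and `b`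
  refine ⟨∏ p ∈ n.primeFactors with ¬ p ∣ a, p, Nat.coprime_of_dvd fun p hp hpat hpn => ?_⟩
  set t := ∏ p ∈ n.primeFactors with ¬ p ∣ a, p
  by_cases hpa : p ∣ a
  · have hpt : ¬ p ∣ t := by
      intro hpt
      obtain ⟨q, hq, hpq⟩ := (Prime.dvd_finsetProd_iff hp.prime _).mp hpt
      rw [Finset.mem_filter, Nat.mem_primeFactors] at hq
      exact hq.2 ((Nat.prime_dvd_prime_iff_eq hp hq.1.1).mp hpq ▸ hpa)
    rcases hp.dvd_mul.mp ((Nat.dvd_add_right hpa).mp hpat) with hpt' | hpb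
    · exact hpt hpt'
    · exact hab p hp hpn hpa hpb
  · have hpt : p ∣ t := Finset.dvd_prod_of_mem _ (by simp [hp, hpn, hn, hpa])
    exact hpa ((Nat.dvd_add_left (hpt.mul_right b)).mp hpat)

theorem ZMod.exists_not_dvd_val_of_addOrderOf_eq {ι : Type*} {n : ℕ} [NeZero n] {v : ι → ZMod n}
    (hv : addOrderOf v = n) {p : ℕ} (hp : p.Prime) (hpn : p ∣ n) : ∃ i, ¬ p ∣ (v i).val := by
  by_contra! h
  have hn : 0 < n := Nat.pos_of_neZero n
  have hv0 : (n / p) • v = 0 := by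
    ext i
    obtain ⟨k, hk⟩ := h i
    rw [Pi.smul_apply, Pi.zero_apply, nsmul_eq_mul, ← ZMod.natCast_zmod_val (v i), hk,
      ← Nat.cast_mul, ZMod.natCast_eq_zero_iff, ← mul_assoc, Nat.div_mul_cancel hpn]
    exact dvd_mul_right n k
  have := Nat.le_of_dvd (Nat.div_pos (Nat.le_of_dvd hn hpn) hp.pos)
    (hv ▸ addOrderOf_dvd_of_nsmul_eq_zero hv0)
  exact absurd this (not_le.mpr (Nat.div_lt_self hn hp.one_lt))

theorem ZMod.exists_isUnit_add_mul_of_addOrderOf_eq {n : ℕ} [NeZero n] {v : Fin 2 → ZMod n}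
    (hv : addOrderOf v = n) : ∃ t : ZMod n, IsUnit (v 0 + t * v 1) := by
  have hab : ∀ p, p.Prime → p ∣ n → p ∣ (v 0).val → ¬ p ∣ (v 1).val := by
    intro p hp hpn hp0 hp1
    obtain ⟨i, hi⟩ := exists_not_dvd_val_of_addOrderOf_eq hv hp hpn
    fin_cases i
    exacts [hi hp0, hi hp1]
  obtain ⟨t, ht⟩ := Nat.exists_coprime_add_mul (NeZero.ne n) hab
  refine ⟨t, ?_⟩
  simpa using (ZMod.isUnit_iff_coprime _ n).mpr ht

/-- For every `n ≥ 1`, the commutator subgroup of `GL₂(ℤ/nℤ)` acts transitively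
on the set of vectors of exact additive order `n` in `(ℤ/nℤ)²`. -/
theorem stmt17 (n : ℕ) (hn : 1 ≤ n) (v w : Fin 2 → ZMod n)
    (hv : addOrderOf v = n) (hw : addOrderOf w = n) :
    ∃ g : GL (Fin 2) (ZMod n), g ∈ commutator (GL (Fin 2) (ZMod n)) ∧
      (g : Matrix (Fin 2) (Fin 2) (ZMod n)).mulVec v = w := by
  have : NeZero n := ⟨by omega⟩
  obtain ⟨s, hs⟩ := ZMod.exists_isUnit_add_mul_of_addOrderOf_eq hv
  obtain ⟨t, ht⟩ := ZMod.exists_isUnit_add_mul_of_addOrderOf_eq hw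
  have hwv : w ∈ orbit (commutator (GL (Fin 2) (ZMod n))) v := by
    rw [orbit_eq_iff.mpr (GeneralLinearGroup.mem_orbit_commutator_of_isUnit_add_mul hs)]
    exact GeneralLinearGroup.mem_orbit_commutator_of_isUnit_add_mul ht
  obtain ⟨⟨g, hg⟩, rfl⟩ := hwv
  exact ⟨g, hg, rfl⟩
end
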